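/- Let R = ℂ[x]_{(x)} (or any DVR with uniformizer x over ℂ with derivation d/dx), and let M = R_x/R. If φ : M → M is R-linear and commutes with the derivation ∂ = d/dx, then there exists λ ∈ ℂ with φ = λ · id. In particular, φ([x^{-m}]) = λ [x^{-m}] for all m ≥ 1. -/
import Mathlib


open Finsupp

/-- Model of `M = R_x/R` for `R = ℂ[x]_{(x)}`: the class `[x^{-(m+1)}]` corresponds to
`Finsupp.single m 1`.  The action of `x` sends `[x^{-(m+1)}] ↦ [x^{-m}]` (and `[x^{-1}] ↦ 0`). -/
noncomputable def xAction : (ℕ →₀ ℂ) →ₗ[ℂ] (ℕ →₀ ℂ) :=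
  Finsupp.lsum ℂ fun m => if m = 0 then 0 else Finsupp.lsingle (m - 1)

/-- The action of `∂ = d/dx`: `∂·[x^{-(m+1)}] = -(m+1)·[x^{-(m+2)}]`. -/
noncomputable def derAction : (ℕ →₀ ℂ) →ₗ[ℂ] (ℕ →₀ ℂ) :=
  Finsupp.lsum ℂ fun m => (-(m + 1) : ℂ) • Finsupp.lsingle (m + 1)

lemma xAction_apply (f : ℕ →₀ ℂ) (k : ℕ) : xAction f k = f (k + 1) := by
  rw [xAction, Finsupp.lsum_apply, Finsupp.sum_apply]
  rw [Finsupp.sum_eq_single (k+1)]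
  · simp
  · intro m _ hm
    rcases Nat.eq_zero_or_pos m with h0 | h0
    · simp [h0]
    · have h1 : m ≠ 0 := by omega
      have h2 : m - 1 ≠ k := by omega
      simp [h1, Finsupp.single_apply, h2]
  · simp

lemma derAction_single (m : ℕ) : derAction (Finsupp.single m (1:ℂ)) = (-(m+1):ℂ) • Finsupp.single (m+1) 1 := by
  simp [derAction]

/-- If `φ : M → M` is `R`-linear (ℂ-linear and commuting with the `x`-action) and commutes
with the derivation `∂ = d/dx`, then `φ = λ·id` for some `λ ∈ ℂ`; in particular
`φ([x^{-m}]) = λ [x^{-m}]` for all `m ≥ 1`. -/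
theorem endomorphism_is_scalar (φ : (ℕ →₀ ℂ) →ₗ[ℂ] (ℕ →₀ ℂ))
    (hx : φ ∘ₗ xAction = xAction ∘ₗ φ)
    (hd : φ ∘ₗ derAction = derAction ∘ₗ φ) :
    ∃ lam : ℂ, φ = lam • LinearMap.id ∧
      ∀ m : ℕ, φ (Finsupp.single m 1) = lam • Finsupp.single m 1 := by
  set lam : ℂ := φ (Finsupp.single 0 1) 0 with hlam
  have h0 : φ (Finsupp.single 0 1) = lam • Finsupp.single 0 1 := by
    have hker : xAction (φ (Finsupp.single 0 1)) = 0 := by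
      have := LinearMap.congr_fun hx (Finsupp.single 0 1)
      simp only [LinearMap.coe_comp, Function.comp_apply] at this
      rw [← this]
      have : xAction (Finsupp.single 0 (1:ℂ)) = 0 := by simp [xAction]
      rw [this, map_zero]
    ext n
    cases n with
    | zero => simp [hlam, Finsupp.single_apply]
    | succ k =>
      have := DFunLike.congr_fun hker k
      rw [xAction_apply] at this
      simpa [Finsupp.single_apply] using this
  have key : ∀ m : ℕ, φ (Finsupp.single m 1) = lam • Finsupp.single m 1 := by
    intro m
    induction m with
    | zero => exact h0
    | succ k ih =>
      have hcomm := LinearMap.congr_fun hd (Finsupp.single k 1)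
      simp only [LinearMap.coe_comp, Function.comp_apply] at hcomm
      rw [derAction_single, ih, map_smul, map_smul, derAction_single] at hcomm
      have hne : (-(k+1) : ℂ) ≠ 0 := by
        rw [neg_ne_zero]
        exact Nat.cast_add_one_ne_zero k
      apply smul_right_injective (ℕ →₀ ℂ) hne
      show (-(↑k + 1) : ℂ) • φ (Finsupp.single (k+1) 1) = (-(↑k + 1) : ℂ) • lam • Finsupp.single (k+1) 1
      rw [hcomm, smul_comm]
  refine ⟨lam, ?_, key⟩
  apply Finsupp.lhom_ext
  intro a b
  have : (Finsupp.single a b : ℕ →₀ ℂ) = b • Finsupp.single a 1 := by simp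
  rw [this, map_smul, key a, map_smul]
  simp [smul_comm]
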